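/- For all integers n > 5 and m > 5, the lexicographic product C_n[C_m] of the cycles of orders n and m has distinguishing index D'(C_n[C_m]) = 2. -/

import Mathlib

open SimpleGraph

/-- The lexicographic product of two simple graphs. -/
def lexProd {V W : Type*} (G : SimpleGraph V) (H : SimpleGraph W) :
    SimpleGraph (V × W) where
  Adj p q := G.Adj p.1 q.1 ∨ (p.1 = q.1 ∧ H.Adj p.2 q.2)
  symm := by
    constructor
    rintro p q (h | ⟨h1, h2⟩)
    · exact Or.inl h.symm
    · exact Or.inr ⟨h1.symm, h2.symm⟩
  loopless := by
    constructor
    rintro p (h | ⟨_, h⟩)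
    · exact h.ne rfl
    · exact h.ne rfl

/-- The distinguishing number: the least `d` such that there is a vertex labeling with `d`
labels preserved only by the identity automorphism. -/
noncomputable def distinguishingNumber {V : Type*} (G : SimpleGraph V) : ℕ :=
  sInf {d : ℕ | ∃ φ : V → Fin d,
    ∀ σ : G ≃g G, (∀ v, φ (σ v) = φ v) → ∀ v, σ v = v}

/-- The distinguishing index: the least `d` such that there is an edge labeling with `d`
labels preserved only by the identity automorphism. -/
noncomputable def distinguishingIndex {V : Type*} (G : SimpleGraph V) : ℕ :=
  sInf {d : ℕ | ∃ ψ : G.edgeSet → Fin d,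
    ∀ σ : G ≃g G, (∀ e, ψ (σ.mapEdgeSet e) = ψ e) → ∀ v, σ v = v}

/-- Every automorphism of `G[H]` is of wreath form, i.e. `Aut(G[H]) = Aut(G)[Aut(H)]`. -/
def wreathForm {V W : Type*} (G : SimpleGraph V) (H : SimpleGraph W) : Prop :=
  ∀ f : lexProd G H ≃g lexProd G H,
    ∃ (α : G ≃g G) (β : V → (H ≃g H)),
      ∀ p : V × W, f p = (α p.1, β (α p.1) p.2)

/-!
Two vertices of `C_n[C_m]` in the same fibre `{a} × C_m` have at least `2m` common neighbours,
two vertices in different fibres at most `m + 4`. Hence for `n, m ≥ 5` every automorphism permutes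
the fibres and has the wreath form `(a, x) ↦ (α a, β_{α a} x)` with `α ∈ Aut C_n`, `β_b ∈ Aut C_m`.

Mark the edge `(0,0)(0,1)` and, for every `a`, the edges `(a,0)(a+1,0)` and `(a,0)(a+1,1)`.
An automorphism preserving the marking fixes fibre `0`, the only fibre inside which an edge is
marked. The two marked edges from `(a,0)` into fibre `a+1` force `α (a+1) = α a + 1` and pin the
levels `0` and `1` in every fibre, and an automorphism of a cycle fixing two adjacent vertices is
trivial. So two labels suffice, and one does not, since rotating every fibre is a nontrivial
automorphism.
-/

open Fin.CommRing

namespace Fin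

variable {n : ℕ} [NeZero n]

theorem induction_add_one {P : Fin n → Prop} (zero : P 0) (succ : ∀ a, P a → P (a + 1))
    (a : Fin n) : P a := by
  rw [← Fin.cast_val_eq_self a]
  induction a.val with
  | zero => simpa using zero
  | succ k ih => simpa using succ _ ih

theorem sub_one_ne_add_one (hn : 3 ≤ n) (a : Fin n) : a - 1 ≠ a + 1 := by
  have h2 : (2 : Fin n) ≠ 0 := by simp [Fin.ext_iff, Nat.mod_eq_of_lt (show 2 < n by omega)]
  exact fun h => h2 (by linear_combination -h)

end Fin

namespace SimpleGraph

theorem Iso.ncard_commonNeighbors {V V' : Type*} {G : SimpleGraph V} {G' : SimpleGraph V'}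
    (σ : G ≃g G') (v w : V) :
    (G'.commonNeighbors (σ v) (σ w)).ncard = (G.commonNeighbors v w).ncard := by
  rw [← Set.ncard_image_of_injective _ σ.injective]
  congr 1
  ext u
  obtain ⟨u, rfl⟩ := σ.surjective u
  simp [mem_commonNeighbors, σ.injective.mem_set_image, σ.map_adj_iff]

variable {n : ℕ} [NeZero n]

theorem cycleGraph_adj_iff (hn : 2 ≤ n) {u v : Fin n} :
    (cycleGraph n).Adj u v ↔ u - v = 1 ∨ v - u = 1 := by
  obtain ⟨k, rfl⟩ := Nat.exists_eq_add_of_le' hn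
  exact cycleGraph_adj

theorem cycleGraph_adj_add_one (hn : 2 ≤ n) (v : Fin n) : (cycleGraph n).Adj v (v + 1) :=
  (cycleGraph_adj_iff hn).2 (Or.inr (add_sub_cancel_left v 1))

theorem cycleGraph_adj_zero_one (hn : 2 ≤ n) : (cycleGraph n).Adj 0 1 := by
  simpa using cycleGraph_adj_add_one hn 0

theorem cycleGraph_neighborSet_eq (hn : 2 ≤ n) (v : Fin n) :
    (cycleGraph n).neighborSet v = {v - 1, v + 1} := by
  obtain ⟨k, rfl⟩ := Nat.exists_eq_add_of_le' hn
  exact cycleGraph_neighborSet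

theorem ncard_cycleGraph_neighborSet (hn : 3 ≤ n) (v : Fin n) :
    ((cycleGraph n).neighborSet v).ncard = 2 := by
  rw [cycleGraph_neighborSet_eq (by omega), Set.ncard_pair (Fin.sub_one_ne_add_one hn v)]

theorem ncard_cycleGraph_commonNeighbors_le_one (hn : 5 ≤ n) {a b : Fin n} (hab : a ≠ b) :
    ((cycleGraph n).commonNeighbors a b).ncard ≤ 1 := by
  have h4 : (4 : Fin n) ≠ 0 := by simp [Fin.ext_iff, Nat.mod_eq_of_lt (show 4 < n by omega)]
  rw [Set.ncard_le_one_iff]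
  simp only [commonNeighbors_eq, cycleGraph_neighborSet_eq (show 2 ≤ n by omega),
    Set.mem_inter_iff, Set.mem_insert_iff, Set.mem_singleton_iff]
  rintro c d ⟨rfl | rfl, h | h⟩ ⟨h' | h', h'' | h''⟩ <;> grind

theorem cycleGraph_iso_apply_eq_self (hn : 3 ≤ n) (f : cycleGraph n ≃g cycleGraph n)
    (h0 : f 0 = 0) (h1 : f 1 = 1) (v : Fin n) : f v = v := by
  suffices ∀ a, f a = a ∧ f (a + 1) = a + 1 from (this v).1
  refine Fin.induction_add_one ⟨h0, by rw [zero_add, h1]⟩ fun a ⟨ha, ha₁⟩ => ⟨ha₁, ?_⟩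
  have hadj := f.map_rel_iff.2 (cycleGraph_adj_add_one (by omega) (a + 1))
  rw [ha₁, ← mem_neighborSet, cycleGraph_neighborSet_eq (by omega)] at hadj
  rcases hadj with h | h
  · have := f.injective (h.trans (by rw [ha]; ring))
    exact absurd (by linear_combination -this) (Fin.sub_one_ne_add_one hn (a + 1))
  · exact h

variable (n) in
def cycleGraphRotation : cycleGraph n ≃g cycleGraph n where
  toEquiv := Equiv.addRight 1
  map_rel_iff' := by simp [cycleGraph_adj']

end SimpleGraph

section LexProd

variable {V W : Type*} {G : SimpleGraph V} {H : SimpleGraph W}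

@[simp] theorem lexProd_adj {p q : V × W} :
    (lexProd G H).Adj p q ↔ G.Adj p.1 q.1 ∨ (p.1 = q.1 ∧ H.Adj p.2 q.2) := Iff.rfl

theorem lexProd_adj_of_fst_ne {a b : V} (hab : a ≠ b) (x y : W) :
    (lexProd G H).Adj (a, x) (b, y) ↔ G.Adj a b := by
  simp [hab]

theorem lexProd_adj_same_fst (a : V) (x y : W) :
    (lexProd G H).Adj (a, x) (a, y) ↔ H.Adj x y := by
  simp

def lexProdCongrRight {W' : Type*} {H' : SimpleGraph W'} (τ : H ≃g H') :
    lexProd G H ≃g lexProd G H' where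
  toEquiv := Equiv.prodCongr (Equiv.refl V) τ.toEquiv
  map_rel_iff' := by simp [τ.map_adj_iff]

theorem neighborSet_prod_univ_subset_commonNeighbors_lexProd (a : V) (x y : W) :
    G.neighborSet a ×ˢ Set.univ ⊆ (lexProd G H).commonNeighbors (a, x) (a, y) := by
  rintro ⟨b, z⟩ ⟨hb, -⟩
  exact ⟨Or.inl hb, Or.inl hb⟩

theorem commonNeighbors_lexProd_subset {a b : V} (hab : a ≠ b) (x y : W) :
    (lexProd G H).commonNeighbors (a, x) (b, y) ⊆
      G.commonNeighbors a b ×ˢ Set.univ ∪ {a} ×ˢ H.neighborSet x ∪ {b} ×ˢ H.neighborSet y := by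
  rintro ⟨c, z⟩ ⟨h₁ | ⟨rfl, h₁⟩, h₂ | ⟨rfl, h₂⟩⟩
  · exact Or.inl (Or.inl ⟨⟨h₁, h₂⟩, trivial⟩)
  · exact Or.inr ⟨rfl, h₂⟩
  · exact Or.inl (Or.inr ⟨rfl, h₁⟩)
  · exact absurd rfl hab

variable [Finite V] [Finite W]

theorem le_ncard_commonNeighbors_lexProd (a : V) (x y : W) :
    (G.neighborSet a).ncard * Nat.card W ≤
      ((lexProd G H).commonNeighbors (a, x) (a, y)).ncard := by
  rw [← Set.ncard_univ W, ← Set.ncard_prod]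
  exact Set.ncard_le_ncard (neighborSet_prod_univ_subset_commonNeighbors_lexProd a x y)

theorem ncard_commonNeighbors_lexProd_le {a b : V} (hab : a ≠ b) (x y : W) :
    ((lexProd G H).commonNeighbors (a, x) (b, y)).ncard ≤
      (G.commonNeighbors a b).ncard * Nat.card W + (H.neighborSet x).ncard +
        (H.neighborSet y).ncard := by
  refine (Set.ncard_le_ncard (commonNeighbors_lexProd_subset hab x y)).trans ?_
  refine (Set.ncard_union_le _ _).trans (add_le_add (Set.ncard_union_le _ _) le_rfl) |>.trans ?_
  simp only [Set.ncard_prod, Set.ncard_univ, Set.ncard_singleton, one_mul, le_refl]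

theorem lexProd_fst_eq_iff_le_ncard_commonNeighbors {k : ℕ}
    (hsame : ∀ a, k ≤ (G.neighborSet a).ncard * Nat.card W)
    (hdiff : ∀ a b x y, a ≠ b → (G.commonNeighbors a b).ncard * Nat.card W +
      (H.neighborSet x).ncard + (H.neighborSet y).ncard < k)
    (p q : V × W) : p.1 = q.1 ↔ k ≤ ((lexProd G H).commonNeighbors p q).ncard := by
  obtain ⟨a, x⟩ := p
  obtain ⟨b, y⟩ := q
  refine ⟨fun (h : a = b) => h ▸ (hsame a).trans (le_ncard_commonNeighbors_lexProd a x y),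
    fun h => ?_⟩
  by_contra hab
  exact absurd ((ncard_commonNeighbors_lexProd_le hab x y).trans_lt (hdiff a b x y hab)) h.not_gt

end LexProd

namespace lexProd

variable {V W : Type*} {G : SimpleGraph V} {H : SimpleGraph W}
  (f : lexProd G H ≃g lexProd G H) (hf : ∀ p q, (f p).1 = (f q).1 ↔ p.1 = q.1) (w₀ : W)

include hf in
theorem fst_symm_apply_eq_iff (p q : V × W) : (f.symm p).1 = (f.symm q).1 ↔ p.1 = q.1 := by
  simpa using (hf (f.symm p) (f.symm q)).symm

def baseIso : G ≃g G where
  toFun a := (f (a, w₀)).1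
  invFun b := (f.symm (b, w₀)).1
  left_inv a := (hf _ (a, w₀)).1 (by simp)
  right_inv b := ((hf ((f.symm (b, w₀)).1, w₀) (f.symm (b, w₀))).2 rfl).trans (by simp)
  map_rel_iff' {a b} := by
    by_cases hab : a = b
    · subst hab; simp
    have hab' : (f (a, w₀)).1 ≠ (f (b, w₀)).1 := mt (hf _ _).1 hab
    simp only [Equiv.coe_fn_mk]
    rw [← lexProd_adj_of_fst_ne hab' (f (a, w₀)).2 (f (b, w₀)).2,
      ← lexProd_adj_of_fst_ne hab w₀ w₀]
    exact f.map_rel_iff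

theorem fst_apply_eq_baseIso (a : V) (x : W) : (f (a, x)).1 = baseIso f hf w₀ a :=
  (hf _ _).2 rfl

theorem apply_baseIso_symm_mk (b : V) (x : W) :
    f ((baseIso f hf w₀).symm b, x) = (b, (f ((baseIso f hf w₀).symm b, x)).2) :=
  Prod.ext ((fst_apply_eq_baseIso f hf w₀ _ x).trans (RelIso.apply_symm_apply _ b)) rfl

theorem symm_apply_mk (b : V) (y : W) :
    f.symm (b, y) = ((baseIso f hf w₀).symm b, (f.symm (b, y)).2) :=
  Prod.ext ((fst_symm_apply_eq_iff f hf _ _).2 rfl) rfl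

def fibreIso (b : V) : H ≃g H where
  toFun x := (f ((baseIso f hf w₀).symm b, x)).2
  invFun y := (f.symm (b, y)).2
  left_inv x := by simp only [← apply_baseIso_symm_mk, RelIso.symm_apply_apply]
  right_inv y := by simp only [← symm_apply_mk, RelIso.apply_symm_apply]
  map_rel_iff' {x y} := by
    simp only [Equiv.coe_fn_mk]
    rw [← lexProd_adj_same_fst (G := G) b, ← apply_baseIso_symm_mk, ← apply_baseIso_symm_mk,
      f.map_rel_iff, lexProd_adj_same_fst]

theorem apply_eq_baseIso_fibreIso (p : V × W) :
    f p = (baseIso f hf w₀ p.1, fibreIso f hf w₀ (baseIso f hf w₀ p.1) p.2) :=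
  Prod.ext (fst_apply_eq_baseIso f hf w₀ p.1 p.2) (by simp [fibreIso])

end lexProd

theorem wreathForm_of_fst_eq_iff {V W : Type*} {G : SimpleGraph V} {H : SimpleGraph W}
    [Nonempty W]
    (hfib : ∀ (f : lexProd G H ≃g lexProd G H) p q, (f p).1 = (f q).1 ↔ p.1 = q.1) :
    wreathForm G H := fun f =>
  let w₀ := Classical.arbitrary W
  ⟨lexProd.baseIso f (hfib f) w₀, lexProd.fibreIso f (hfib f) w₀,
    lexProd.apply_eq_baseIso_fibreIso f (hfib f) w₀⟩

theorem wreathForm_cycleGraph {n m : ℕ} [NeZero n] [NeZero m] (hn : 5 ≤ n) (hm : 5 ≤ m) :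
    wreathForm (cycleGraph n) (cycleGraph m) := by
  have hcard : Nat.card (Fin m) = m := Nat.card_eq_fintype_card.trans (Fintype.card_fin m)
  have hfib := lexProd_fst_eq_iff_le_ncard_commonNeighbors (k := 2 * m)
    (G := cycleGraph n) (H := cycleGraph m)
    (fun a => by rw [ncard_cycleGraph_neighborSet (by omega), hcard])
    (fun a b x y hab => by
      rw [ncard_cycleGraph_neighborSet (by omega), ncard_cycleGraph_neighborSet (by omega), hcard]
      nlinarith [ncard_cycleGraph_commonNeighbors_le_one hn hab])
  exact wreathForm_of_fst_eq_iff fun f p q => by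
    rw [hfib, hfib, f.ncard_commonNeighbors]

section Distinguishing

variable {V : Type*} {G : SimpleGraph V}

theorem distinguishingIndex_eq_two (hE : G.edgeSet.Nonempty) (τ : G ≃g G) {v : V}
    (hτ : τ v ≠ v) (ψ : G.edgeSet → Fin 2)
    (hψ : ∀ σ : G ≃g G, (∀ e, ψ (σ.mapEdgeSet e) = ψ e) → ∀ v, σ v = v) :
    distinguishingIndex G = 2 := by
  refine le_antisymm (Nat.sInf_le ⟨ψ, hψ⟩) (le_csInf ⟨2, ψ, hψ⟩ fun d ⟨φ, hφ⟩ => ?_)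
  by_contra! hd
  interval_cases d
  · exact (φ ⟨_, hE.some_mem⟩).elim0
  · exact hτ (hφ τ (fun _ => Subsingleton.elim _ _) v)

open Classical in
noncomputable def markingLabelling (G : SimpleGraph V) (M : Set (Sym2 V)) : G.edgeSet → Fin 2 :=
  fun e => if (e : Sym2 V) ∈ M then 1 else 0

theorem mk_mem_of_markingLabelling_mapEdgeSet {M : Set (Sym2 V)} {σ : G ≃g G}
    (hσ : ∀ e, markingLabelling G M (σ.mapEdgeSet e) = markingLabelling G M e) {p q : V}
    (hpq : G.Adj p q) (h : s(p, q) ∈ M) : s(σ p, σ q) ∈ M := by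
  have := hσ ⟨s(p, q), hpq⟩
  by_contra h'
  simp [markingLabelling, Iso.mapEdgeSet, Hom.mapEdgeSet, h, h'] at this

end Distinguishing

section MarkedEdges

variable {n m : ℕ} [NeZero n] [NeZero m]

variable (n m) in
def markedEdges : Set (Sym2 (Fin n × Fin m)) :=
  insert s((0, 0), (0, 1))
    (Set.range (fun a => s((a, 0), (a + 1, 0))) ∪ Set.range (fun a => s((a, 0), (a + 1, 1))))

theorem fst_eq_zero_of_mk_mem_markedEdges (hn : 2 ≤ n) {c : Fin n} {u v : Fin m}
    (h : s((c, u), (c, v)) ∈ markedEdges n m) : c = 0 := by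
  have : Nontrivial (Fin n) := Fin.nontrivial_iff_two_le.2 hn
  have : ∀ a : Fin n, a + 1 ≠ a := succ_ne_self
  simp only [markedEdges, Set.mem_insert_iff, Set.mem_union, Set.mem_range, Sym2.eq_iff,
    Prod.ext_iff] at h
  grind

theorem mk_mem_markedEdges_of_fst_ne {c d : Fin n} {u v : Fin m} (hcd : c ≠ d)
    (h : s((c, u), (d, v)) ∈ markedEdges n m) :
    (d = c + 1 ∧ u = 0 ∧ (v = 0 ∨ v = 1)) ∨ (c = d + 1 ∧ v = 0 ∧ (u = 0 ∨ u = 1)) := by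
  simp only [markedEdges, Set.mem_insert_iff, Set.mem_union, Set.mem_range, Sym2.eq_iff,
    Prod.ext_iff] at h
  grind

theorem eq_add_one_of_mk_mem_markedEdges (hn : 3 ≤ n) {c d : Fin n} {u v v' : Fin m}
    (hcd : c ≠ d) (hvv' : v ≠ v') (h : s((c, u), (d, v)) ∈ markedEdges n m)
    (h' : s((c, u), (d, v')) ∈ markedEdges n m) : d = c + 1 ∧ u = 0 ∧ (v' = 0 ∨ v' = 1) := by
  have hcd' : ¬(d = c + 1 ∧ c = d + 1) := fun ⟨h₁, h₂⟩ =>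
    Fin.sub_one_ne_add_one hn c (by linear_combination h₁ + h₂)
  rcases mk_mem_markedEdges_of_fst_ne hcd h with h | h <;>
    rcases mk_mem_markedEdges_of_fst_ne hcd h' with h' | h' <;> grind

theorem apply_eq_self_of_preserves_markedEdges (hn : 5 ≤ n) (hm : 5 ≤ m)
    (σ : lexProd (cycleGraph n) (cycleGraph m) ≃g lexProd (cycleGraph n) (cycleGraph m))
    (hσ : ∀ p q, (lexProd (cycleGraph n) (cycleGraph m)).Adj p q → s(p, q) ∈ markedEdges n m →
      s(σ p, σ q) ∈ markedEdges n m)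
    (v : Fin n × Fin m) : σ v = v := by
  have : Nontrivial (Fin n) := Fin.nontrivial_iff_two_le.2 (by omega)
  have : Nontrivial (Fin m) := Fin.nontrivial_iff_two_le.2 (by omega)
  obtain ⟨α, β, hσαβ⟩ := wreathForm_cycleGraph hn hm σ
  have hα0 : α 0 = 0 := by
    have := hσ (0, 0) (0, 1) (Or.inr ⟨rfl, cycleGraph_adj_zero_one (by omega)⟩)
      (Set.mem_insert _ _)
    rw [hσαβ, hσαβ] at this
    exact fst_eq_zero_of_mk_mem_markedEdges (by omega) this
  have hcross (a : Fin n) :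
      α (a + 1) = α a + 1 ∧ β (α a) 0 = 0 ∧ (β (α (a + 1)) 1 = 0 ∨ β (α (a + 1)) 1 = 1) := by
    have hadj (y : Fin m) : (lexProd (cycleGraph n) (cycleGraph m)).Adj (a, 0) (a + 1, y) :=
      Or.inl (cycleGraph_adj_add_one (by omega) a)
    have h₀ := hσ _ _ (hadj 0) (Or.inr (Or.inl ⟨a, rfl⟩))
    have h₁ := hσ _ _ (hadj 1) (Or.inr (Or.inr ⟨a, rfl⟩))
    rw [hσαβ, hσαβ] at h₀ h₁
    exact eq_add_one_of_mk_mem_markedEdges (by omega) (α.injective.ne (succ_ne_self a).symm)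
      ((β _).injective.ne zero_ne_one) h₀ h₁
  have hαid : ∀ a, α a = a := Fin.induction_add_one hα0 fun a ha => by rw [(hcross a).1, ha]
  have hβ0 (a : Fin n) : β a 0 = 0 := by simpa [hαid] using (hcross a).2.1
  have hβ1 (a : Fin n) : β a 1 = 1 := by
    have := (hcross (a - 1)).2.2
    simp only [hαid, sub_add_cancel] at this
    exact this.resolve_left fun h => one_ne_zero ((β a).injective (h.trans (hβ0 a).symm))
  obtain ⟨a, x⟩ := v
  rw [hσαβ, hαid, cycleGraph_iso_apply_eq_self (by omega) (β a) (hβ0 a) (hβ1 a)]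

end MarkedEdges

theorem stmt10 (n m : ℕ) (hn : 5 < n) (hm : 5 < m) :
    distinguishingIndex (lexProd (SimpleGraph.cycleGraph n) (SimpleGraph.cycleGraph m)) = 2 := by
  have : NeZero n := ⟨by omega⟩
  have : NeZero m := ⟨by omega⟩
  have hedge : (lexProd (cycleGraph n) (cycleGraph m)).Adj (0, 0) (0, 1) :=
    Or.inr ⟨rfl, cycleGraph_adj_zero_one (by omega)⟩
  have hrot : lexProdCongrRight (G := cycleGraph n) (cycleGraphRotation m) (0, 0) ≠ (0, 0) := by
    simp [lexProdCongrRight, cycleGraphRotation]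
    omega
  refine distinguishingIndex_eq_two ⟨s((0, 0), (0, 1)), hedge⟩ _ hrot
    (markingLabelling _ (markedEdges n m)) fun σ hσ => ?_
  exact apply_eq_self_of_preserves_markedEdges (by omega) (by omega) σ
    fun _ _ hpq => mk_mem_of_markingLabelling_mapEdgeSet hσ hpq
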